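/- If ‖·‖ is a unitarily invariant M-norm on M_n(ℂ), then ‖·‖ = α‖·‖_∞ for some α > 0. -/

import Mathlib

open Matrix BigOperators ComplexOrder

/-- Square complex matrices. -/
abbrev Mat (n : ℕ) := Matrix (Fin n) (Fin n) ℂ

/-- `N` is a norm on `Mat n`. -/
def IsMatrixNorm {n : ℕ} (N : Mat n → ℝ) : Prop :=
  (∀ A, N A = 0 ↔ A = 0) ∧
  (∀ (c : ℂ) (A : Mat n), N (c • A) = ‖c‖ * N A) ∧
  (∀ A B : Mat n, N (A + B) ≤ N A + N B)

/-- A set of matrices is C*-convex. -/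
def CStarConvex {n : ℕ} (K : Set (Mat n)) : Prop :=
  ∀ (k : ℕ) (C A : Fin k → Mat n), (∀ i, A i ∈ K) →
    (∑ i, (C i)ᴴ * C i = 1) → (∑ i, (C i)ᴴ * A i * C i) ∈ K

/-- `N` is an M-norm. -/
def IsMNorm {n : ℕ} (N : Mat n → ℝ) : Prop :=
  ∀ (k : ℕ) (C X : Fin k → Mat n), (∑ i, (C i)ᴴ * C i = 1) →
    N (∑ i, (C i)ᴴ * X i * C i) ≤ ⨆ i, N (X i)

/-- `N` is an L-norm. -/
def IsLNorm {n : ℕ} (N : Mat n → ℝ) : Prop :=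
  ∀ (k : ℕ) (C : Fin k → Mat n) (X : Mat n), (∑ i, (C i)ᴴ * C i = 1) →
    ∑ i, N (C i * X * (C i)ᴴ) ≤ N X

/-- The dual norm with respect to the pairing `⟨Y|X⟩ = Tr(Yᴴ X)`. -/
noncomputable def dualNorm {n : ℕ} (N : Mat n → ℝ) (Y : Mat n) : ℝ :=
  sSup {r | ∃ X : Mat n, N X ≤ 1 ∧ r = ‖(Yᴴ * X).trace‖}

/-- The operator (spectral) norm of a matrix. -/
noncomputable def opNorm {n : ℕ} (A : Mat n) : ℝ :=
  ‖Matrix.toEuclideanCLM (𝕜 := ℂ) (n := Fin n) A‖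

/-- The trace norm `‖A‖₁ = Tr((AᴴA)^{1/2})`. -/
noncomputable def traceNorm {n : ℕ} (A : Mat n) : ℝ :=
  (((Matrix.posSemidef_conjTranspose_mul_self A).1.eigenvectorUnitary : Mat n) *
    Matrix.diagonal (fun i => ((Real.sqrt
      ((Matrix.posSemidef_conjTranspose_mul_self A).1.eigenvalues i) : ℝ) : ℂ)) *
    (star (Matrix.posSemidef_conjTranspose_mul_self A).1.eigenvectorUnitary : Mat n)).trace.re

/-- The numerical radius. -/
noncomputable def numRadius {n : ℕ} (A : Mat n) : ℝ :=
  sSup {r | ∃ x : EuclideanSpace ℂ (Fin n), ‖x‖ = 1 ∧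
    r = ‖(inner ℂ x (Matrix.toEuclideanCLM (𝕜 := ℂ) (n := Fin n) A x))‖}

/-!
Compressing a matrix `X` by the matrix units `Eⱼᵢ` (`∑ᵢ Eⱼᵢᴴ X Eⱼᵢ = Xⱼⱼ • 1`) shows
`|Xⱼⱼ| N(1) ≤ N(X)`. Conversely, a diagonal `D` with `0 ≤ D ≤ 1` equals
`√D · 1 · √D + √(1 - D) · 0 · √(1 - D)`, so `N(D) ≤ N(1)`. Together `N(D) = ‖D‖ N(1)` for
nonnegative diagonal `D`, hence, by the spectral theorem and unitary invariance, for every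
positive semidefinite matrix. The polar decomposition `A = U |A|` extends this to invertible `A`,
and both sides are continuous (`N` being convex) while invertible matrices are dense.
-/

-- Under this scope `‖A‖` is the L² operator norm, so `opNorm A = ‖A‖` by `rfl`.
open scoped Matrix.Norms.L2Operator MatrixOrder

theorem IsUnit.exists_mem_unitary_eq_mul_cfcAbs {A : Type*} [CStarAlgebra A] [PartialOrder A]
    [StarOrderedRing A] {a : A} (ha : IsUnit a) : ∃ u ∈ unitary A, a = u * CFC.abs a := by
  have habs : IsUnit (CFC.abs a) := (CFC.isUnit_sqrt_iff _).2 (ha.star.mul ha)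
  refine ⟨ha.unit * habs.unit⁻¹, (Units.mul_inv_mem_unitary _ _).2 ?_, ?_⟩
  · ext
    simp [(CFC.abs_nonneg a).isSelfAdjoint.star_eq, CFC.abs_mul_abs]
  · rw [mul_assoc, IsUnit.val_inv_mul, mul_one, IsUnit.unit_spec]

theorem Matrix.dense_setOf_isUnit {𝕜 ι : Type*} [NontriviallyNormedField 𝕜] [CompleteSpace 𝕜]
    [Fintype ι] [DecidableEq ι] : Dense {A : Matrix ι ι 𝕜 | IsUnit A} := by
  intro A
  let shift : 𝕜 → Matrix ι ι 𝕜 := fun t => algebraMap 𝕜 _ t + A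
  have hshift : Continuous shift := (continuous_algebraMap 𝕜 _).add continuous_const
  have hdense : Dense (spectrum 𝕜 (-A))ᶜ := (-A).finite_spectrum.countable.dense_compl 𝕜
  have hA : A ∈ closure (shift '' (spectrum 𝕜 (-A))ᶜ) := by
    simpa [shift] using
      image_closure_subset_closure_image hshift ⟨0, hdense.closure_eq ▸ trivial, rfl⟩
  refine closure_mono ?_ hA
  rintro _ ⟨t, ht, rfl⟩
  simpa [shift] using spectrum.notMem_iff.1 ht

def IsUnitarilyInvariant {n : ℕ} (N : Mat n → ℝ) : Prop :=
  ∀ A, ∀ U ∈ unitary (Mat n), ∀ V ∈ unitary (Mat n), N (U * A * V) = N A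

namespace IsMatrixNorm

variable {n : ℕ} {N : Mat n → ℝ}

theorem map_zero (hN : IsMatrixNorm N) : N 0 = 0 := (hN.1 0).2 rfl

theorem map_neg (hN : IsMatrixNorm N) (A : Mat n) : N (-A) = N A := by
  simpa using hN.2.1 (-1) A

theorem nonneg (hN : IsMatrixNorm N) (A : Mat n) : 0 ≤ N A := by
  have h := hN.2.2 A (-A)
  rw [add_neg_cancel, hN.map_zero, hN.map_neg] at h
  linarith

theorem map_real_smul (hN : IsMatrixNorm N) (r : ℝ) (A : Mat n) : N (r • A) = |r| * N A := by
  rw [← Complex.coe_smul, hN.2.1, Complex.norm_real, Real.norm_eq_abs]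

theorem convexOn (hN : IsMatrixNorm N) : ConvexOn ℝ Set.univ N := by
  refine ⟨convex_univ, fun A _ B _ a b ha hb _ => ?_⟩
  calc N (a • A + b • B) ≤ N (a • A) + N (b • B) := hN.2.2 _ _
    _ = a • N A + b • N B := by
      rw [hN.map_real_smul, hN.map_real_smul, abs_of_nonneg ha, abs_of_nonneg hb, smul_eq_mul,
        smul_eq_mul]

theorem continuous (hN : IsMatrixNorm N) : Continuous N :=
  continuousOn_univ.1 (hN.convexOn.continuousOn isOpen_univ)

theorem apply_one_pos (hN : IsMatrixNorm N) (hn : 0 < n) : 0 < N 1 := by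
  have : NeZero n := ⟨hn.ne'⟩
  exact (hN.nonneg 1).lt_of_ne' fun h => one_ne_zero ((hN.1 1).1 h)

end IsMatrixNorm

namespace IsMNorm

variable {n : ℕ} {N : Mat n → ℝ}

theorem norm_apply_mul_le (hN : IsMatrixNorm N) (hM : IsMNorm N) (X : Mat n) (j : Fin n) :
    ‖X j j‖ * N 1 ≤ N X := by
  have : Nonempty (Fin n) := ⟨j⟩
  have hC : ∑ i, (single j i (1 : ℂ))ᴴ * single j i 1 = 1 := by
    simp [sum_single_eq_diagonal]
  have hcompress : ∑ i, (single j i (1 : ℂ))ᴴ * X * single j i 1 = X j j • 1 := by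
    simp [sum_single_eq_diagonal, smul_one_eq_diagonal]
  have h := hM n (fun i => single j i 1) (fun _ => X) hC
  rwa [hcompress, hN.2.1, ciSup_const] at h

theorem apply_diagonal_le (hN : IsMatrixNorm N) (hM : IsMNorm N) {c : Fin n → ℝ} (hc₀ : 0 ≤ c)
    (hc₁ : c ≤ 1) : N (diagonal fun i => (c i : ℂ)) ≤ N 1 := by
  have hsqrt : ∀ {x : ℝ}, 0 ≤ x → (√x : ℂ) * √x = x := fun hx => by
    rw [← Complex.ofReal_mul, Real.mul_self_sqrt hx]
  have hsqrt₀ : ∀ i, (√(c i) : ℂ) * √(c i) = c i := fun i => hsqrt (hc₀ i)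
  have hsqrt₁ : ∀ i, (√(1 - c i) : ℂ) * √(1 - c i) = 1 - c i := fun i =>
    (hsqrt (sub_nonneg.2 (hc₁ i))).trans (by push_cast; rfl)
  let C : Fin 2 → Mat n :=
    ![diagonal fun i => (√(c i) : ℂ), diagonal fun i => (√(1 - c i) : ℂ)]
  have hC : ∑ k, (C k)ᴴ * C k = 1 := by
    simp [C, diagonal_mul_diagonal, hsqrt₀, hsqrt₁, ← diagonal_one]
  have hD : ∑ k, (C k)ᴴ * ![1, 0] k * C k = diagonal fun i => (c i : ℂ) := by
    simp [C, diagonal_mul_diagonal, hsqrt₀]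
  refine (hD ▸ hM 2 C ![1, 0] hC).trans (ciSup_le ?_)
  simp [Fin.forall_fin_two, hN.map_zero, hN.nonneg]

theorem norm_diagonal_mul_le (hN : IsMatrixNorm N) (hM : IsMNorm N) (v : Fin n → ℂ) :
    ‖diagonal v‖ * N 1 ≤ N (diagonal v) := by
  rcases isEmpty_or_nonempty (Fin n) with _ | _
  · simp [Subsingleton.elim v 0, hN.map_zero]
  · obtain ⟨j, hj⟩ := (IsGreatest.pi_norm v).1
    simpa [l2_opNorm_diagonal, ← hj] using norm_apply_mul_le hN hM (diagonal v) j

theorem apply_diagonal_ofReal (hN : IsMatrixNorm N) (hM : IsMNorm N) {d : Fin n → ℝ}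
    (hd : 0 ≤ d) : N (diagonal fun i => (d i : ℂ)) = ‖diagonal fun i => (d i : ℂ)‖ * N 1 := by
  set s := ‖diagonal fun i => (d i : ℂ)‖
  have hds : ∀ i, d i ≤ s := fun i => by
    simpa [s, l2_opNorm_diagonal, abs_of_nonneg (hd i)] using
      norm_le_pi_norm (fun i => (d i : ℂ)) i
  have hscale : (diagonal fun i => (d i : ℂ)) = s • diagonal fun i => ((d i / s : ℝ) : ℂ) := by
    rw [← diagonal_smul]
    congr 1
    ext i
    have hs0 : s = 0 → d i = 0 := fun hs0 => ((hds i).trans hs0.le).antisymm (hd i)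
    simp only [Pi.smul_apply, Complex.real_smul, ← Complex.ofReal_mul, mul_div_cancel_of_imp' hs0]
  refine le_antisymm ?_ (norm_diagonal_mul_le hN hM _)
  rw [hscale, hN.map_real_smul, abs_of_nonneg (norm_nonneg _)]
  refine mul_le_mul_of_nonneg_left (apply_diagonal_le hN hM (fun i => ?_) fun i => ?_)
    (norm_nonneg _)
  · exact div_nonneg (hd i) (norm_nonneg _)
  · exact div_le_one_of_le₀ (hds i) (norm_nonneg _)

theorem apply_eq_of_posSemidef (hN : IsMatrixNorm N) (hM : IsMNorm N)
    (hU : IsUnitarilyInvariant N) {P : Mat n} (hP : P.PosSemidef) : N P = ‖P‖ * N 1 := by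
  set U := hP.1.eigenvectorUnitary
  have hPD : P = U * diagonal (fun i => (hP.1.eigenvalues i : ℂ)) * star U := by
    simpa [Function.comp_def] using hP.1.spectral_theorem
  rw [hPD, hU _ _ U.2 _ (star U).2, CStarRing.norm_mul_mem_unitary _ (star U).2,
    CStarRing.norm_mem_unitary_mul _ U.2]
  exact apply_diagonal_ofReal hN hM hP.eigenvalues_nonneg

theorem apply_eq_of_isUnit (hN : IsMatrixNorm N) (hM : IsMNorm N) (hU : IsUnitarilyInvariant N)
    {A : Mat n} (hA : IsUnit A) : N A = ‖A‖ * N 1 := by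
  obtain ⟨u, hu, hAu⟩ := hA.exists_mem_unitary_eq_mul_cfcAbs
  have hNA := hU (CFC.abs A) u hu 1 (one_mem _)
  rw [mul_one, ← hAu] at hNA
  rw [hNA, apply_eq_of_posSemidef hN hM hU (nonneg_iff_posSemidef.1 (CFC.abs_nonneg A)),
    CFC.norm_abs]

theorem apply_eq_norm_mul (hN : IsMatrixNorm N) (hM : IsMNorm N) (hU : IsUnitarilyInvariant N)
    (A : Mat n) : N A = ‖A‖ * N 1 :=
  congrFun (Continuous.ext_on Matrix.dense_setOf_isUnit hN.continuous
    (continuous_norm.mul continuous_const) fun _ hA => apply_eq_of_isUnit hN hM hU hA) A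

end IsMNorm

theorem unitarilyInvariant_MNorm_eq_opNorm {n : ℕ} (N : Mat n → ℝ)
    (hN : IsMatrixNorm N) (hM : IsMNorm N)
    (hui : ∀ (A U V : Mat n), Uᴴ * U = 1 → U * Uᴴ = 1 → Vᴴ * V = 1 → V * Vᴴ = 1 →
      N (U * A * V) = N A) :
    ∃ α : ℝ, 0 < α ∧ ∀ A : Mat n, N A = α * opNorm A := by
  have hU : IsUnitarilyInvariant N := fun A U hu V hv => hui A U V hu.1 hu.2 hv.1 hv.2
  rcases Nat.eq_zero_or_pos n with rfl | hn
  · exact ⟨1, one_pos, fun A => by simp [Subsingleton.elim A 0, hN.map_zero, opNorm]⟩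
  · refine ⟨N 1, hN.apply_one_pos hn, fun A => ?_⟩
    rw [hM.apply_eq_norm_mul hN hU A, mul_comm, opNorm, ← cstar_norm_def]
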